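/- arXiv:2409.01598 — 2 statements merged into one kernel-verified Lean document; each statement's English description precedes it below -/
import Mathlib

section
/- Let G be a reaction graph embedded in ℝ^d that decomposes as a disjoint union G = G₁ ⊔ G₂ of two sub reaction graphs whose sets of species are disjoint (i.e., supp V₁ ∩ supp V₂ = ∅, where supp V denotes the union of supports of all vertices). Then G is endotactic if and only if both G₁ and G₂ are endotactic. -/
/-! Species of `G₁` do not occur in `G₂`, so killing the coordinates of `u` outside the species
of `G₁` gives a direction `u'` that pairs with the vertices of `G₁` as `u` does and is orthogonal
to every vertex of `G₂`. A `u`-violating edge of `G₁` is then a `u'`-violating edge of `G₁ ⊔ G₂`,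
since the edges of `G₂` have reaction vectors orthogonal to `u'` and contribute no sources.
Conversely, a violating edge of the union is violating for the part containing it. -/

open Matrix Finset
open scoped Matrix Classical

abbrev Vec (d : ℕ) := Fin d → ℝ
abbrev Edge (d : ℕ) := Vec d × Vec d

/-- Sources of edges whose reaction vector is not orthogonal to `u`. -/
def srcU {d : ℕ} (E : Finset (Edge d)) (u : Vec d) : Set (Vec d) :=
  {y | ∃ y', (y, y') ∈ E ∧ (y' - y) ⬝ᵥ u ≠ 0}

/-- `G` is `u`-endotactic: no `u`-endotacticity violating reaction. -/
def uEndotactic {d : ℕ} (E : Finset (Edge d)) (u : Vec d) : Prop :=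
  ¬ ∃ y y', (y, y') ∈ E ∧ 0 < (y' - y) ⬝ᵥ u ∧ ∀ z ∈ srcU E u, z ⬝ᵥ u ≤ y ⬝ᵥ u

def Endotactic {d : ℕ} (E : Finset (Edge d)) : Prop := ∀ u : Vec d, uEndotactic E u

/-- Reachability by a directed path. -/
def Reach {d : ℕ} (E : Finset (Edge d)) : Vec d → Vec d → Prop :=
  Relation.ReflTransGen (fun a b => (a, b) ∈ E)

def IsEig {d : ℕ} (A : Matrix (Fin d) (Fin d) ℝ) (μ : ℂ) : Prop :=
  ∃ v : Fin d → ℂ, v ≠ 0 ∧ (A.map Complex.ofReal).mulVec v = μ • v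

/-- `y` is a vertex of the reaction graph with edge set `E`. -/
def InV {d : ℕ} (E : Finset (Edge d)) (y : Vec d) : Prop :=
  ∃ e ∈ E, e.1 = y ∨ e.2 = y

/-- Species `i` appears in the reaction graph with edge set `E`. -/
def InSpecies {d : ℕ} (E : Finset (Edge d)) (i : Fin d) : Prop :=
  ∃ y, InV E y ∧ y i ≠ 0

section

variable {d : ℕ}

lemma inV_fst {E : Finset (Edge d)} {y y' : Vec d} (h : (y, y') ∈ E) : InV E y :=
  ⟨(y, y'), h, Or.inl rfl⟩

lemma inV_snd {E : Finset (Edge d)} {y y' : Vec d} (h : (y, y') ∈ E) : InV E y' :=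
  ⟨(y, y'), h, Or.inr rfl⟩

lemma srcU_mono {E F : Finset (Edge d)} (h : E ⊆ F) (u : Vec d) : srcU E u ⊆ srcU F u :=
  fun _ ⟨y', hy', hne⟩ => ⟨y', h hy', hne⟩

lemma uEndotactic.union {E₁ E₂ : Finset (Edge d)} {u : Vec d}
    (h₁ : uEndotactic E₁ u) (h₂ : uEndotactic E₂ u) : uEndotactic (E₁ ∪ E₂) u := by
  rintro ⟨y, y', hmem, hpos, hmax⟩
  rcases mem_union.mp hmem with hm | hm
  · exact h₁ ⟨y, y', hm, hpos, fun z hz => hmax z (srcU_mono subset_union_left u hz)⟩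
  · exact h₂ ⟨y, y', hm, hpos, fun z hz => hmax z (srcU_mono subset_union_right u hz)⟩

lemma uEndotactic.of_union {E₁ E₂ : Finset (Edge d)} {u v : Vec d}
    (hv₁ : ∀ z, InV E₁ z → z ⬝ᵥ v = z ⬝ᵥ u) (hv₂ : ∀ z, InV E₂ z → z ⬝ᵥ v = 0)
    (h : uEndotactic (E₁ ∪ E₂) v) : uEndotactic E₁ u := by
  have hdiff : ∀ {y y'}, (y, y') ∈ E₁ → (y' - y) ⬝ᵥ v = (y' - y) ⬝ᵥ u := fun hm => by
    rw [sub_dotProduct, sub_dotProduct, hv₁ _ (inV_snd hm), hv₁ _ (inV_fst hm)]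
  rintro ⟨y, y', hmem, hpos, hmax⟩
  refine h ⟨y, y', mem_union_left _ hmem, (hdiff hmem).symm ▸ hpos, ?_⟩
  rintro z ⟨z', hz', hne⟩
  rcases mem_union.mp hz' with hm | hm
  · rw [hv₁ _ (inV_fst hm), hv₁ _ (inV_fst hmem)]
    exact hmax z ⟨z', hm, hdiff hm ▸ hne⟩
  · refine absurd ?_ hne
    rw [sub_dotProduct, hv₂ _ (inV_snd hm), hv₂ _ (inV_fst hm), sub_zero]

noncomputable def restrictSpecies (E : Finset (Edge d)) (u : Vec d) : Vec d :=
  fun i => if InSpecies E i then u i else 0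

lemma dotProduct_restrictSpecies_of_inV {E : Finset (Edge d)} {z : Vec d} (hz : InV E z)
    (u : Vec d) : z ⬝ᵥ restrictSpecies E u = z ⬝ᵥ u := by
  refine sum_congr rfl fun i _ => ?_
  by_cases h : InSpecies E i
  · simp [restrictSpecies, h]
  · have : z i = 0 := not_not.mp fun hne => h ⟨z, hz, hne⟩
    simp [this]

lemma dotProduct_restrictSpecies_eq_zero {E F : Finset (Edge d)}
    (hspec : ∀ i, ¬ (InSpecies E i ∧ InSpecies F i)) {z : Vec d} (hz : InV F z) (u : Vec d) :
    z ⬝ᵥ restrictSpecies E u = 0 := by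
  refine sum_eq_zero fun i _ => ?_
  by_cases h : InSpecies E i
  · have : z i = 0 := not_not.mp fun hne => hspec i ⟨h, z, hz, hne⟩
    simp [this]
  · simp [restrictSpecies, h]

lemma Endotactic.of_union_left {E₁ E₂ : Finset (Edge d)}
    (hspec : ∀ i, ¬ (InSpecies E₁ i ∧ InSpecies E₂ i)) (h : Endotactic (E₁ ∪ E₂)) :
    Endotactic E₁ := fun u =>
  (h (restrictSpecies E₁ u)).of_union (fun _ hz => dotProduct_restrictSpecies_of_inV hz u)
    (fun _ hz => dotProduct_restrictSpecies_eq_zero hspec hz u)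

end

theorem stmt5_general {d : ℕ} (E₁ E₂ : Finset (Edge d))
    (hspec : ∀ i : Fin d, ¬ (InSpecies E₁ i ∧ InSpecies E₂ i)) :
    Endotactic (E₁ ∪ E₂) ↔ Endotactic E₁ ∧ Endotactic E₂ := by
  refine ⟨fun h => ⟨h.of_union_left hspec, ?_⟩, fun ⟨h₁, h₂⟩ u => (h₁ u).union (h₂ u)⟩
  refine Endotactic.of_union_left (fun i hi => hspec i hi.symm) ?_
  rwa [union_comm]

/-- A reaction graph decomposed as a disjoint union of two sub reaction graphs
with disjoint sets of species is endotactic iff both parts are endotactic. -/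
theorem stmt5 {d : ℕ} (E₁ E₂ : Finset (Edge d))
    (hsimple₁ : ∀ e ∈ E₁, e.1 ≠ e.2) (hsimple₂ : ∀ e ∈ E₂, e.1 ≠ e.2)
    (hdisj : Disjoint E₁ E₂)
    (hspec : ∀ i : Fin d, ¬ (InSpecies E₁ i ∧ InSpecies E₂ i)) :
    Endotactic (E₁ ∪ E₂) ↔ Endotactic E₁ ∧ Endotactic E₂ :=
  stmt5_general E₁ E₂ hspec
end

section
/- Let G be a first order endotactic mass-action system on ℕ₀^d with average flux matrix A. Then every eigenvalue of A has nonpositive real part; moreover all eigenvalues of A have strictly negative real part if and only if G equals its weakly connected component containing the zero complex (G = G⁰). -/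
/-!
Every source is `0` or a unit vector `eᵢ`, and endotacticity in the direction `(1, …, 1)` forces
the targets of the reactions `eᵢ → y'` to be `0` or unit vectors as well. Hence `A` is a Metzler
matrix with nonpositive row sums, and Gershgorin's theorem puts every eigenvalue in a disc
`‖μ - a‖ ≤ -a` with `a ≤ 0`, whose only point on the imaginary axis is `0`. So `A` is Hurwitz iff it
is nonsingular.

If some `eᵢ` is not weakly connected to `0`, the indicator of its weak component lies in the kernel
of `A`. Conversely, for a kernel vector `w` with a positive maximum, the maximum principle makes the
set `S` of maximisers closed under outgoing reactions, and endotacticity in the direction of the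
indicator of `S` forbids reactions entering `S`. Then `S` is a union of weak components avoiding
`0`, which is impossible since every species is the source of some reaction.
-/

open Matrix Finset
open scoped Matrix Classical

def IsSource {d : ℕ} (E : Finset (Edge d)) (y : Vec d) : Prop :=
  ∃ y', (y, y') ∈ E

def WReach {d : ℕ} (E : Finset (Edge d)) : Vec d → Vec d → Prop :=
  Relation.ReflTransGen (fun a b => (a, b) ∈ E ∨ (b, a) ∈ E)

section Graph

variable {d : ℕ} {E : Finset (Edge d)}

structure IsFirstOrderEndotactic (E : Finset (Edge d)) : Prop where
  natCoord : ∀ y, InV E y → ∀ i, ∃ n : ℕ, y i = (n : ℝ)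
  sum_source_le_one : ∀ y, IsSource E y → ∑ i, y i ≤ 1
  endotactic : Endotactic E

def IsOutClosed (E : Finset (Edge d)) (S : Set (Fin d)) : Prop :=
  ∀ m ∈ S, ∀ b, ((Pi.single m 1 : Vec d), b) ∈ E → ∃ k ∈ S, b = Pi.single k 1

lemma eq_zero_or_eq_single_of_sum_le_one {y : Vec d} (hy : ∀ i, ∃ n : ℕ, y i = (n : ℝ))
    (hs : ∑ i, y i ≤ 1) : y = 0 ∨ ∃ k, y = Pi.single k 1 := by
  choose n hn using hy
  obtain rfl : y = fun i => (n i : ℝ) := funext hn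
  have hsum : ∑ i, n i ≤ 1 := by exact_mod_cast (show ∑ i, (n i : ℝ) ≤ 1 from hs)
  by_cases hzero : ∀ i, n i = 0
  · exact Or.inl (funext fun i => by simp [hzero i])
  obtain ⟨k, hk⟩ := not_forall.mp hzero
  refine Or.inr ⟨k, funext fun j => ?_⟩
  rcases eq_or_ne j k with rfl | hjk
  · have := single_le_sum (fun i _ => Nat.zero_le (n i)) (mem_univ j)
    simp [show n j = 1 by omega]
  · have := sum_le_sum_of_subset (f := n) (subset_univ {j, k})
    rw [sum_pair hjk] at this
    simp [hjk, show n j = 0 by omega]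

lemma nonneg_of_inV (hnat : ∀ y, InV E y → ∀ i, ∃ n : ℕ, y i = (n : ℝ)) {y : Vec d}
    (hy : InV E y) (i : Fin d) : 0 ≤ y i := by
  obtain ⟨n, hn⟩ := hnat y hy i
  exact hn ▸ n.cast_nonneg

lemma wReach_iff_of_mem {a b y : Vec d} (hab : (a, b) ∈ E) : WReach E y a ↔ WReach E y b :=
  ⟨fun h => h.tail (Or.inl hab), fun h => h.tail (Or.inr hab)⟩

lemma WReach.symm {a b : Vec d} (h : WReach E a b) : WReach E b a := by
  induction h with
  | refl => exact .refl
  | tail _ hstep ih => exact .head hstep.symm ih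

lemma Endotactic.sub_dotProduct_nonpos (hendo : Endotactic E) {u a b : Vec d} (hab : (a, b) ∈ E)
    (hmax : ∀ z y', (z, y') ∈ E → (y' - z) ⬝ᵥ u ≠ 0 → z ⬝ᵥ u ≤ a ⬝ᵥ u) :
    (b - a) ⬝ᵥ u ≤ 0 :=
  not_lt.mp fun hpos => hendo u ⟨a, b, hab, hpos, fun z ⟨y', hy', hne⟩ => hmax z y' hy' hne⟩

lemma sum_target_le_one (hfo : ∀ y, IsSource E y → ∑ i, y i ≤ 1) (hendo : Endotactic E)
    {i : Fin d} {b : Vec d} (hb : ((Pi.single i 1 : Vec d), b) ∈ E) : ∑ k, b k ≤ 1 := by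
  have := hendo.sub_dotProduct_nonpos (u := 1) hb fun z y' hz _ => by
    simpa [dotProduct_one] using hfo z ⟨y', hz⟩
  simp only [dotProduct_one, Pi.sub_apply, sum_sub_distrib] at this
  simp only [sum_pi_single', mem_univ, if_true] at this
  linarith

namespace IsFirstOrderEndotactic

lemma source_eq_zero_or_single (hG : IsFirstOrderEndotactic E) {a b : Vec d} (hab : (a, b) ∈ E) :
    a = 0 ∨ ∃ k, a = Pi.single k 1 :=
  eq_zero_or_eq_single_of_sum_le_one (hG.natCoord a ⟨_, hab, Or.inl rfl⟩)
    (hG.sum_source_le_one a ⟨b, hab⟩)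

lemma target_eq_zero_or_single (hG : IsFirstOrderEndotactic E) {i : Fin d} {b : Vec d}
    (hb : ((Pi.single i 1 : Vec d), b) ∈ E) : b = 0 ∨ ∃ k, b = Pi.single k 1 :=
  eq_zero_or_eq_single_of_sum_le_one (hG.natCoord b ⟨_, hb, Or.inr rfl⟩)
    (sum_target_le_one hG.sum_source_le_one hG.endotactic hb)

lemma isSource_single (hG : IsFirstOrderEndotactic E)
    (hnored : ∀ i : Fin d, ∃ e ∈ E, e.2 i ≠ e.1 i) (j : Fin d) :
    IsSource E (Pi.single j 1) := by
  by_contra hnone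
  simp only [IsSource, not_exists] at hnone
  have hsource : ∀ a b, (a, b) ∈ E → a j = 0 := by
    intro a b hab
    rcases hG.source_eq_zero_or_single hab with rfl | ⟨m, rfl⟩
    · rfl
    · exact Pi.single_eq_of_ne (by rintro rfl; exact hnone b hab) 1
  obtain ⟨⟨a, b⟩, hab, hne⟩ := hnored j
  have hpos : 0 < b j := (nonneg_of_inV hG.natCoord ⟨_, hab, Or.inr rfl⟩ j).lt_of_ne
    (hne.trans_eq (hsource a b hab)).symm
  have := hG.endotactic.sub_dotProduct_nonpos (u := Pi.single j 1) hab fun z y' hz _ => by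
    simp [hsource z y' hz, hsource a b hab]
  simp only [dotProduct_single, Pi.sub_apply, hsource a b hab, sub_zero, mul_one] at this
  linarith

end IsFirstOrderEndotactic

lemma IsOutClosed.sub_dotProduct_indicator_nonpos (hG : IsFirstOrderEndotactic E)
    {S : Set (Fin d)} (hS : IsOutClosed E S) {a b : Vec d} (hab : (a, b) ∈ E) :
    (b - a) ⬝ᵥ S.indicator 1 ≤ 0 := by
  have hu : 0 ≤ S.indicator (1 : Fin d → ℝ) := Set.indicator_nonneg fun _ _ => zero_le_one
  have ha : 0 ≤ a ⬝ᵥ S.indicator 1 :=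
    dotProduct_nonneg_of_nonneg (nonneg_of_inV hG.natCoord ⟨_, hab, Or.inl rfl⟩) hu
  refine hG.endotactic.sub_dotProduct_nonpos hab fun z y' hz hne => ?_
  rcases hG.source_eq_zero_or_single hz with rfl | ⟨m, rfl⟩
  · rwa [zero_dotProduct]
  by_cases hm : m ∈ S
  · obtain ⟨k, hk, rfl⟩ := hS m hm y' hz
    simp [sub_dotProduct, Set.indicator_of_mem hm, Set.indicator_of_mem hk] at hne
  · rwa [single_dotProduct, Set.indicator_of_notMem hm, mul_zero]

lemma IsOutClosed.not_wReach_zero (hG : IsFirstOrderEndotactic E) {S : Set (Fin d)}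
    (hS : IsOutClosed E S) {m : Fin d} (hm : m ∈ S) : ¬ WReach E 0 (Pi.single m 1 : Vec d) := by
  have hnonneg : ∀ y, InV E y → 0 ≤ y ⬝ᵥ S.indicator 1 := fun y hy =>
    dotProduct_nonneg_of_nonneg (nonneg_of_inV hG.natCoord hy)
      (Set.indicator_nonneg fun _ _ => zero_le_one)
  suffices h : ∀ y, WReach E 0 y → y ⬝ᵥ S.indicator 1 = 0 by
    intro hreach
    simpa [Set.indicator_of_mem hm] using h _ hreach
  intro y hy
  induction hy with
  | refl => exact zero_dotProduct _
  | @tail a b _ hstep ih =>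
    rcases hstep with hab | hba
    · have := hS.sub_dotProduct_indicator_nonpos hG hab
      rw [sub_dotProduct, ih] at this
      exact le_antisymm (by linarith) (hnonneg b ⟨_, hab, Or.inr rfl⟩)
    · rcases hG.source_eq_zero_or_single hba with rfl | ⟨k, rfl⟩
      · exact zero_dotProduct _
      by_cases hk : k ∈ S
      · obtain ⟨l, hl, rfl⟩ := hS k hk a hba
        simp [Set.indicator_of_mem hl] at ih
      · rw [single_dotProduct, Set.indicator_of_notMem hk, mul_zero]

end Graph

lemma re_nonpos_of_norm_sub_le {μ : ℂ} {a : ℝ} (h : ‖μ - a‖ ≤ -a) : μ.re ≤ 0 := by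
  have := Complex.re_le_norm (μ - a)
  simp only [Complex.sub_re, Complex.ofReal_re] at this
  linarith

lemma eq_zero_of_norm_sub_le {μ : ℂ} {a : ℝ} (h : ‖μ - a‖ ≤ -a) (hre : 0 ≤ μ.re) : μ = 0 := by
  have hre0 : μ.re = 0 := le_antisymm (re_nonpos_of_norm_sub_le h) hre
  have hsq : ‖μ - a‖ ^ 2 = a ^ 2 + μ.im ^ 2 := by
    rw [Complex.sq_norm, Complex.normSq_apply]
    simp only [Complex.sub_re, Complex.sub_im, Complex.ofReal_re, Complex.ofReal_im, hre0]
    ring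
  have him : μ.im = 0 := by nlinarith [norm_nonneg (μ - a)]
  exact Complex.ext hre0 him

section Hurwitz

variable {d : ℕ} {A : Matrix (Fin d) (Fin d) ℝ} {μ : ℂ}

lemma IsEig.hasEigenvalue (h : IsEig A μ) :
    Module.End.HasEigenvalue (Matrix.toLin' (A.map Complex.ofReal)) μ := by
  obtain ⟨v, hv, hAv⟩ := h
  exact Module.End.hasEigenvalue_of_hasEigenvector
    ⟨Module.End.mem_eigenspace_iff.mpr (by simpa using hAv), hv⟩

lemma IsEig.exists_norm_sub_diag_le (hM : ∀ i j, i ≠ j → 0 ≤ A i j) (hrow : ∀ i, ∑ j, A i j ≤ 0)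
    (h : IsEig A μ) : ∃ k, ‖μ - A k k‖ ≤ -A k k := by
  obtain ⟨k, hk⟩ := eigenvalue_mem_ball h.hasEigenvalue
  refine ⟨k, ?_⟩
  rw [mem_closedBall_iff_norm] at hk
  simp only [map_apply, Complex.norm_real, Real.norm_eq_abs] at hk
  have hoff : ∑ j ∈ univ.erase k, |A k j| = ∑ j ∈ univ.erase k, A k j :=
    sum_congr rfl fun j hj => abs_of_nonneg (hM k j (ne_of_mem_erase hj).symm)
  have hrowk := hrow k
  rw [← add_sum_erase _ _ (mem_univ k)] at hrowk
  linarith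

lemma isEig_zero_iff_det_eq_zero : IsEig A 0 ↔ A.det = 0 := by
  rw [IsEig]
  simp only [zero_smul]
  rw [exists_mulVec_eq_zero_iff, ← Complex.ofReal_eq_zero]
  exact Eq.congr_left (Complex.ofRealHom.map_det A).symm

lemma forall_isEig_re_neg_iff_det_ne_zero (hM : ∀ i j, i ≠ j → 0 ≤ A i j)
    (hrow : ∀ i, ∑ j, A i j ≤ 0) : (∀ μ, IsEig A μ → μ.re < 0) ↔ A.det ≠ 0 := by
  rw [ne_eq, ← isEig_zero_iff_det_eq_zero]
  refine ⟨fun h h0 => (h 0 h0).false, fun h μ hμ => ?_⟩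
  by_contra! hre
  obtain ⟨k, hk⟩ := hμ.exists_norm_sub_diag_le hM hrow
  exact h (eq_zero_of_norm_sub_le hk hre ▸ hμ)

end Hurwitz

section FluxMatrix

variable {d : ℕ} {E : Finset (Edge d)} {κ : Edge d → ℝ}

noncomputable def fluxMatrix (E : Finset (Edge d)) (κ : Edge d → ℝ) : Matrix (Fin d) (Fin d) ℝ :=
  Matrix.of fun i j =>
    ∑ e ∈ E.filter (fun e => e.1 = (Pi.single i 1 : Vec d)), κ e * (e.2 j - e.1 j)

lemma fluxMatrix_mulVec_apply (v : Vec d) (i : Fin d) :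
    (fluxMatrix E κ *ᵥ v) i =
      ∑ e ∈ E.filter (fun e => e.1 = (Pi.single i 1 : Vec d)), κ e * (e.2 ⬝ᵥ v - v i) := by
  simp only [mulVec, dotProduct, fluxMatrix, of_apply, sum_mul]
  rw [sum_comm]
  refine sum_congr rfl fun e he => ?_
  rw [(mem_filter.mp he).2]
  simp only [mul_assoc, ← mul_sum, sub_mul, sum_sub_distrib, Pi.single_apply, ite_mul, one_mul,
    zero_mul, sum_ite_eq', mem_univ, if_true]

lemma fluxMatrix_nonneg_of_ne (hκ : ∀ e ∈ E, 0 < κ e)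
    (hnat : ∀ y, InV E y → ∀ i, ∃ n : ℕ, y i = (n : ℝ)) {i j : Fin d} (hij : i ≠ j) :
    0 ≤ fluxMatrix E κ i j := by
  refine sum_nonneg fun e he => ?_
  obtain ⟨heE, hsrc⟩ := mem_filter.mp he
  rw [hsrc, Pi.single_eq_of_ne hij.symm, sub_zero]
  exact mul_nonneg (hκ e heE).le (nonneg_of_inV hnat ⟨e, heE, Or.inr rfl⟩ j)

lemma sum_fluxMatrix_nonpos (hκ : ∀ e ∈ E, 0 < κ e) (hfo : ∀ y, IsSource E y → ∑ i, y i ≤ 1)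
    (hendo : Endotactic E) (i : Fin d) : ∑ j, fluxMatrix E κ i j ≤ 0 := by
  have hrow : ∑ j, fluxMatrix E κ i j = (fluxMatrix E κ *ᵥ 1) i := by
    simp [mulVec, dotProduct]
  rw [hrow, fluxMatrix_mulVec_apply]
  refine sum_nonpos fun e he => ?_
  obtain ⟨heE, hsrc⟩ := mem_filter.mp he
  have hb : ((Pi.single i 1 : Vec d), e.2) ∈ E := hsrc ▸ heE
  have := sum_target_le_one hfo hendo hb
  rw [dotProduct_one, Pi.one_apply]
  exact mul_nonpos_of_nonneg_of_nonpos (hκ e heE).le (by linarith)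

lemma fluxMatrix_mulVec_eq_zero_of_forall_mem {v : Vec d}
    (hv : ∀ j b, ((Pi.single j 1 : Vec d), b) ∈ E → b ⬝ᵥ v = v j) : fluxMatrix E κ *ᵥ v = 0 := by
  funext j
  rw [fluxMatrix_mulVec_apply]
  refine sum_eq_zero fun e he => ?_
  obtain ⟨heE, hsrc⟩ := mem_filter.mp he
  rw [hv j e.2 (hsrc ▸ heE), sub_self, mul_zero]

lemma exists_fluxMatrix_mulVec_eq_zero_of_not_wReach (hG : IsFirstOrderEndotactic E) {i : Fin d}
    (hi : ¬ WReach E 0 (Pi.single i 1 : Vec d)) : ∃ v ≠ 0, fluxMatrix E κ *ᵥ v = 0 := by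
  let C : Set (Fin d) := {k | WReach E (Pi.single i 1) (Pi.single k 1)}
  refine ⟨C.indicator 1, fun h => ?_, fluxMatrix_mulVec_eq_zero_of_forall_mem fun j b hb => ?_⟩
  · have hiC : i ∈ C := Relation.ReflTransGen.refl
    simpa [Set.indicator_of_mem hiC] using congrFun h i
  rcases hG.target_eq_zero_or_single hb with rfl | ⟨k, rfl⟩
  · have hj : j ∉ C := fun hj => hi (WReach.symm ((wReach_iff_of_mem hb).mp hj))
    rw [zero_dotProduct, Set.indicator_of_notMem hj]
  · have hjk : j ∈ C ↔ k ∈ C := wReach_iff_of_mem hb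
    by_cases hj : j ∈ C
    · simp [Set.indicator_of_mem hj, Set.indicator_of_mem (hjk.mp hj)]
    · simp [Set.indicator_of_notMem hj, Set.indicator_of_notMem (hj ∘ hjk.mpr)]

lemma isOutClosed_setOf_eq_max (hκ : ∀ e ∈ E, 0 < κ e) (hG : IsFirstOrderEndotactic E)
    {w : Vec d} (hw : fluxMatrix E κ *ᵥ w = 0) {j : Fin d} (hmax : ∀ k, w k ≤ w j)
    (hpos : 0 < w j) : IsOutClosed E {k | w k = w j} := by
  intro m (hm : w m = w j) b hb
  have hle : ∀ c, ((Pi.single m 1 : Vec d), c) ∈ E → c ⬝ᵥ w ≤ w m := by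
    intro c hc
    rcases hG.target_eq_zero_or_single hc with rfl | ⟨k, rfl⟩
    · simpa [hm] using hpos.le
    · simpa [hm] using hmax k
  have hterms : ∀ e ∈ E.filter (fun e => e.1 = (Pi.single m 1 : Vec d)),
      κ e * (e.2 ⬝ᵥ w - w m) = 0 := by
    refine (sum_eq_zero_iff_of_nonpos fun e he => ?_).mp ?_
    · obtain ⟨heE, hsrc⟩ := mem_filter.mp he
      exact mul_nonpos_of_nonneg_of_nonpos (hκ e heE).le (sub_nonpos.mpr (hle e.2 (hsrc ▸ heE)))
    · rw [← fluxMatrix_mulVec_apply, hw, Pi.zero_apply]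
  have hbw : b ⬝ᵥ w = w m := by
    have := hterms (_, b) (mem_filter.mpr ⟨hb, rfl⟩)
    rwa [mul_eq_zero, or_iff_right (hκ _ hb).ne', sub_eq_zero] at this
  rcases hG.target_eq_zero_or_single hb with rfl | ⟨k, rfl⟩
  · rw [zero_dotProduct, hm] at hbw
    exact absurd hbw hpos.ne
  · exact ⟨k, by simpa [hm] using hbw, rfl⟩

lemma nonpos_of_fluxMatrix_mulVec_eq_zero (hκ : ∀ e ∈ E, 0 < κ e) (hG : IsFirstOrderEndotactic E)
    (hnored : ∀ i : Fin d, ∃ e ∈ E, e.2 i ≠ e.1 i) (hconn : ∀ e ∈ E, WReach E 0 e.1) {w : Vec d}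
    (hw : fluxMatrix E κ *ᵥ w = 0) (j : Fin d) : w j ≤ 0 := by
  by_contra! hj
  have : Nonempty (Fin d) := ⟨j⟩
  obtain ⟨m, hm⟩ := Finite.exists_max w
  have hS := isOutClosed_setOf_eq_max hκ hG hw hm (hj.trans_le (hm j))
  obtain ⟨b, hb⟩ := hG.isSource_single hnored m
  exact hS.not_wReach_zero hG rfl (hconn _ hb)

lemma eq_zero_of_fluxMatrix_mulVec_eq_zero (hκ : ∀ e ∈ E, 0 < κ e) (hG : IsFirstOrderEndotactic E)
    (hnored : ∀ i : Fin d, ∃ e ∈ E, e.2 i ≠ e.1 i) (hconn : ∀ e ∈ E, WReach E 0 e.1) {v : Vec d}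
    (hv : fluxMatrix E κ *ᵥ v = 0) : v = 0 := by
  have hle := nonpos_of_fluxMatrix_mulVec_eq_zero hκ hG hnored hconn hv
  have hge := nonpos_of_fluxMatrix_mulVec_eq_zero hκ hG hnored hconn
    (by rw [mulVec_neg, hv, neg_zero] : fluxMatrix E κ *ᵥ -v = 0)
  exact funext fun j => le_antisymm (hle j) (by simpa using hge j)

lemma fluxMatrix_det_ne_zero_iff (hκ : ∀ e ∈ E, 0 < κ e) (hG : IsFirstOrderEndotactic E)
    (hnored : ∀ i : Fin d, ∃ e ∈ E, e.2 i ≠ e.1 i) :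
    (fluxMatrix E κ).det ≠ 0 ↔ ∀ e ∈ E, WReach E 0 e.1 := by
  rw [ne_eq, ← exists_mulVec_eq_zero_iff]
  refine ⟨fun hsing e he => ?_, fun hconn ⟨v, hv, hAv⟩ =>
    hv (eq_zero_of_fluxMatrix_mulVec_eq_zero hκ hG hnored hconn hAv)⟩
  by_contra hnot
  rcases hG.source_eq_zero_or_single he with h0 | ⟨i, hi⟩
  · exact hnot (h0 ▸ Relation.ReflTransGen.refl)
  · exact hsing (exists_fluxMatrix_mulVec_eq_zero_of_not_wReach hG (hi ▸ hnot))

end FluxMatrix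

theorem stmt16_general {d : ℕ} (E : Finset (Edge d)) (κ : Edge d → ℝ)
    (hκ : ∀ e ∈ E, 0 < κ e)
    (hnat : ∀ y, InV E y → ∀ i, ∃ n : ℕ, y i = (n : ℝ))
    (hfo : ∀ y, IsSource E y → ∑ i, y i ≤ 1)
    (hnored : ∀ i : Fin d, ∃ e ∈ E, e.2 i ≠ e.1 i)
    (hendo : Endotactic E)
    (A : Matrix (Fin d) (Fin d) ℝ)
    (hA : ∀ i j, A i j =
      ∑ e ∈ E.filter (fun e => e.1 = (Pi.single i 1 : Vec d)), κ e * (e.2 j - e.1 j)) :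
    (∀ μ : ℂ, IsEig A μ → μ.re ≤ 0) ∧
    ((∀ μ : ℂ, IsEig A μ → μ.re < 0) ↔ ∀ e ∈ E, WReach E 0 e.1) := by
  obtain rfl : A = fluxMatrix E κ := Matrix.ext hA
  have hM : ∀ i j, i ≠ j → 0 ≤ fluxMatrix E κ i j := fun _ _ => fluxMatrix_nonneg_of_ne hκ hnat
  have hrow : ∀ i, ∑ j, fluxMatrix E κ i j ≤ 0 := sum_fluxMatrix_nonpos hκ hfo hendo
  refine ⟨fun μ hμ => ?_, ?_⟩
  · obtain ⟨k, hk⟩ := hμ.exists_norm_sub_diag_le hM hrow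
    exact re_nonpos_of_norm_sub_le hk
  · rw [forall_isEig_re_neg_iff_det_ne_zero hM hrow]
    exact fluxMatrix_det_ne_zero_iff hκ ⟨hnat, hfo, hendo⟩ hnored

/-- For a first order endotactic mass-action system, all eigenvalues of the
average flux matrix `A` have nonpositive real part, and they all have strictly
negative real part iff the reaction graph equals the weakly connected
component of the zero complex. -/
theorem stmt16 {d : ℕ} (E : Finset (Edge d)) (κ : Edge d → ℝ)
    (hsimple : ∀ e ∈ E, e.1 ≠ e.2)
    (hκ : ∀ e ∈ E, 0 < κ e)
    (hnat : ∀ y, InV E y → ∀ i, ∃ n : ℕ, y i = (n : ℝ))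
    (hfo : ∀ y, IsSource E y → ∑ i, y i ≤ 1)
    (hnored : ∀ i : Fin d, ∃ e ∈ E, e.2 i ≠ e.1 i)
    (hendo : Endotactic E)
    (A : Matrix (Fin d) (Fin d) ℝ)
    (hA : ∀ i j, A i j =
      ∑ e ∈ E.filter (fun e => e.1 = (Pi.single i 1 : Vec d)), κ e * (e.2 j - e.1 j)) :
    (∀ μ : ℂ, IsEig A μ → μ.re ≤ 0) ∧
    ((∀ μ : ℂ, IsEig A μ → μ.re < 0) ↔ ∀ e ∈ E, WReach E 0 e.1) :=
  stmt16_general E κ hκ hnat hfo hnored hendo A hA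
end
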